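/- Let ρ be a quantum state on ℂ^d (positive semidefinite with trace 1) and let Π₁, …, Π_N be orthogonal projections on ℂ^d. Then ‖ ρ − Π₁ ⋯ Π_N ⋯ Π₁ ρ Π₁ ⋯ Π_N ⋯ Π₁ ‖₁ ≤ 2√2 · 2^{1/4} · ( Σ_{i=1}^{N} Tr{(I − Π_i) ρ} )^{1/4}, where Π₁ ⋯ Π_N ⋯ Π₁ denotes the product Π₁ Π₂ ⋯ Π_N ⋯ Π₂ Π₁. -/

import Mathlib

/-!
Purify `ρ = X X†` to the unit vector `ψ = X` of the Hilbert–Schmidt space, on which each `Πᵢ`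
acts by left multiplication as an orthogonal projection. With `C = Π_N ⋯ Π₁` the palindromic
product is `B = C† C`, and trace duality gives `‖ρ - BρB‖₁ ≤ (‖ψ‖ + ‖Bψ‖) ‖ψ - Bψ‖ ≤ 2 ‖ψ - Bψ‖`.
As `C†` is a contraction, `‖ψ - Bψ‖² ≤ δ := 1 - ‖Cψ‖²`. Gao's quantum union bound, proved by
peeling off one projection at a time and applying Cauchy–Schwarz in `ℝ²`, gives
`1 - Re⟪ψ, Cψ⟫ ≤ √ε √δ` with `ε = ∑ᵢ ‖(1 - Πᵢ)ψ‖² = ∑ᵢ Tr((1 - Πᵢ)ρ)`; since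
`δ ≤ 2 (1 - Re⟪ψ, Cψ⟫)`, this yields `δ ≤ 4ε`. Hence `‖ψ - Bψ‖ ≤ min(1, 2√ε) ≤ √2 ε^{1/4}`.
-/

open Matrix ComplexOrder

/-- The trace norm `‖A‖₁ = Tr √(A† A)` of a complex matrix. -/
noncomputable def traceNorm {n : Type*} [Fintype n] [DecidableEq n]
    (A : Matrix n n ℂ) : ℝ :=
  ((Matrix.posSemidef_conjTranspose_mul_self A).isHermitian.eigenvectorUnitary.1 *
      diagonal (((↑) : ℝ → ℂ) ∘ (Real.sqrt ∘ (Matrix.posSemidef_conjTranspose_mul_self A).isHermitian.eigenvalues)) *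
      (star (Matrix.posSemidef_conjTranspose_mul_self A).isHermitian.eigenvectorUnitary :
        Matrix n n ℂ)).trace.re

open scoped InnerProductSpace Kronecker MatrixOrder

theorem mul_add_mul_le_sqrt_mul_sqrt (a b c d : ℝ) :
    a * b + c * d ≤ √(a ^ 2 + c ^ 2) * √(b ^ 2 + d ^ 2) := by
  rw [← Real.sqrt_mul (by positivity)]
  refine Real.le_sqrt_of_sq_le ?_
  nlinarith [sq_nonneg (a * d - b * c)]

theorem le_sqrt_two_mul_rpow_of_sq_le_four_mul {η ε : ℝ} (hη : 0 ≤ η) (hη1 : η ≤ 1)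
    (h : η ^ 2 ≤ 4 * ε) : η ≤ √2 * ε ^ ((1 : ℝ) / 4) := by
  have hε : 0 ≤ ε := by nlinarith
  have hpow : (√2 * ε ^ ((1 : ℝ) / 4)) ^ 4 = 4 * ε := by
    have hsqrt : √2 ^ 4 = 4 := by
      rw [show 4 = 2 * 2 from rfl, pow_mul, Real.sq_sqrt zero_le_two]; norm_num
    rw [mul_pow, hsqrt, ← Real.rpow_natCast (ε ^ _), ← Real.rpow_mul hε]
    norm_num
  rw [← pow_le_pow_iff_left₀ hη (by positivity) four_ne_zero, hpow]
  nlinarith [pow_le_pow_of_le_one hη hη1 (show 2 ≤ 4 by norm_num)]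

theorem List.star_prod_of_forall_isSelfAdjoint {R : Type*} [Monoid R] [StarMul R] {l : List R}
    (hl : ∀ p ∈ l, IsSelfAdjoint p) : star l.prod = l.reverse.prod := by
  induction l with
  | nil => simp
  | cons p t ih =>
    simp only [List.mem_cons, forall_eq_or_imp] at hl
    rw [List.prod_cons, star_mul, ih hl.2, hl.1.star_eq, List.reverse_cons, List.prod_append,
      List.prod_singleton]

theorem List.prod_append_reverse_tail {M : Type*} [Monoid M] {l : List M}
    (hl : ∀ p ∈ l, IsIdempotentElem p) : (l ++ l.reverse.tail).prod = l.prod * l.reverse.prod := by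
  induction l using List.reverseRecOn with
  | nil => simp
  | append_singleton t p _ =>
    simp only [List.mem_append, List.mem_singleton] at hl
    simp only [List.reverse_append, List.reverse_singleton, List.singleton_append, List.tail_cons,
      List.prod_append, List.prod_cons, List.prod_nil, mul_one]
    rw [← mul_assoc (t.prod * p) p, mul_assoc t.prod p p, (hl p (Or.inr rfl)).eq]

theorem List.prod_append_reverse_tail_eq_star_mul_self {R : Type*} [Monoid R] [StarMul R]
    {l : List R} (hl : ∀ p ∈ l, IsStarProjection p) :
    (l ++ l.reverse.tail).prod = star l.reverse.prod * l.reverse.prod := by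
  rw [List.star_prod_of_forall_isSelfAdjoint fun p hp => (hl p (List.mem_reverse.mp hp)).isSelfAdjoint,
    List.reverse_reverse]
  exact List.prod_append_reverse_tail fun p hp => (hl p hp).isIdempotentElem

section Hilbert

variable {𝕜 E : Type*} [RCLike 𝕜] [NormedAddCommGroup E] [InnerProductSpace 𝕜 E]

theorem re_inner_map_self_sub_le {T : E →L[𝕜] E} (hT : ‖T‖ ≤ 1) (x y : E) :
    RCLike.re (⟪x, T x⟫_𝕜 - ⟪y, T y⟫_𝕜) ≤ (‖x‖ + ‖y‖) * ‖x - y‖ := by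
  have hsplit : ⟪x, T x⟫_𝕜 - ⟪y, T y⟫_𝕜 = ⟪x - y, T x⟫_𝕜 + ⟪y, T (x - y)⟫_𝕜 := by
    simp only [inner_sub_left, inner_sub_right, map_sub]; ring
  have hT' (z : E) : ‖T z‖ ≤ ‖z‖ := T.le_of_opNorm_le hT z |>.trans_eq (one_mul _)
  rw [hsplit, map_add]
  calc RCLike.re ⟪x - y, T x⟫_𝕜 + RCLike.re ⟪y, T (x - y)⟫_𝕜
      ≤ ‖x - y‖ * ‖T x‖ + ‖y‖ * ‖T (x - y)‖ :=
        add_le_add (re_inner_le_norm _ _) (re_inner_le_norm _ _)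
    _ ≤ ‖x - y‖ * ‖x‖ + ‖y‖ * ‖x - y‖ := by gcongr <;> exact hT' _
    _ = (‖x‖ + ‖y‖) * ‖x - y‖ := by ring

variable [CompleteSpace E]

theorem IsStarProjection.inner_apply_right {p : E →L[𝕜] E} (hp : IsStarProjection p) (x y : E) :
    ⟪x, p y⟫_𝕜 = ⟪p x, p y⟫_𝕜 := by
  rw [← ContinuousLinearMap.adjoint_inner_right, ← ContinuousLinearMap.star_eq_adjoint,
    hp.isSelfAdjoint.star_eq, ← mul_apply_eq_comp, hp.isIdempotentElem.eq]

theorem IsStarProjection.norm_apply_sq_add_norm_one_sub_apply_sq {p : E →L[𝕜] E}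
    (hp : IsStarProjection p) (x : E) : ‖p x‖ ^ 2 + ‖(1 - p) x‖ ^ 2 = ‖x‖ ^ 2 := by
  have h : ⟪p x, (1 - p) x⟫_𝕜 = 0 := by
    rw [← ContinuousLinearMap.adjoint_inner_right, ← ContinuousLinearMap.star_eq_adjoint,
      hp.isSelfAdjoint.star_eq, ← mul_apply_eq_comp, hp.mul_one_sub_self]
    simp
  simpa [sq] using (norm_add_sq_eq_norm_sq_add_norm_sq_of_inner_eq_zero _ _ h).symm

theorem IsStarProjection.norm_apply_le {p : E →L[𝕜] E} (hp : IsStarProjection p) (x : E) :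
    ‖p x‖ ≤ ‖x‖ := by
  have := hp.norm_apply_sq_add_norm_one_sub_apply_sq x
  nlinarith [norm_nonneg (p x), norm_nonneg x, norm_nonneg ((1 - p) x)]

theorem norm_list_prod_apply_le {l : List (E →L[𝕜] E)} (hl : ∀ p ∈ l, IsStarProjection p)
    (x : E) : ‖l.prod x‖ ≤ ‖x‖ := by
  induction l generalizing x with
  | nil => simp
  | cons p t ih =>
    simp only [List.mem_cons, forall_eq_or_imp] at hl
    rw [List.prod_cons, mul_apply_eq_comp]
    exact (hl.1.norm_apply_le _).trans (ih hl.2 x)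

theorem norm_list_prod_le_one {l : List (E →L[𝕜] E)} (hl : ∀ p ∈ l, IsStarProjection p) :
    ‖l.prod‖ ≤ 1 :=
  l.prod.opNorm_le_bound zero_le_one fun x => by simpa using norm_list_prod_apply_le hl x

theorem norm_sub_star_mul_self_apply_sq_le {C : E →L[𝕜] E} (hC : ‖C‖ ≤ 1) (x : E) :
    ‖x - (star C * C) x‖ ^ 2 ≤ ‖x‖ ^ 2 - ‖C x‖ ^ 2 := by
  have hinner : RCLike.re ⟪x, (star C * C) x⟫_𝕜 = ‖C x‖ ^ 2 := by
    rw [mul_apply_eq_comp, ContinuousLinearMap.star_eq_adjoint,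
      ContinuousLinearMap.adjoint_inner_right, inner_self_eq_norm_sq]
  have hstar : ‖star C (C x)‖ ≤ ‖C x‖ :=
    (star C).le_of_opNorm_le ((norm_star C).le.trans hC) _ |>.trans_eq (one_mul _)
  rw [@norm_sub_sq 𝕜, hinner, mul_apply_eq_comp]
  nlinarith [norm_nonneg (star C (C x))]

/-- Gao's quantum union bound. -/
theorem re_inner_sub_list_prod_apply_le {l : List (E →L[𝕜] E)}
    (hl : ∀ p ∈ l, IsStarProjection p) (w x : E) :
    RCLike.re ⟪w, x - l.prod x⟫_𝕜 ≤
      √((l.map fun p => ‖(1 - p) w‖ ^ 2).sum) * √(‖x‖ ^ 2 - ‖l.prod x‖ ^ 2) := by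
  induction l with
  | nil => simp
  | cons p t ih =>
    simp only [List.mem_cons, forall_eq_or_imp] at hl
    obtain ⟨hp, ht⟩ := hl
    set y := t.prod x
    set S := (t.map fun q => ‖(1 - q) w‖ ^ 2).sum
    have hS : 0 ≤ S := List.sum_nonneg (by simp)
    have hD : 0 ≤ ‖x‖ ^ 2 - ‖y‖ ^ 2 := by
      nlinarith [norm_list_prod_apply_le ht x, norm_nonneg y]
    have hdefect : ‖x‖ ^ 2 - ‖p y‖ ^ 2 = ‖(1 - p) y‖ ^ 2 + (‖x‖ ^ 2 - ‖y‖ ^ 2) := by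
      linarith [hp.norm_apply_sq_add_norm_one_sub_apply_sq y]
    have hsplit : x - (p :: t).prod x = (1 - p) y + (x - y) := by
      simp [y, mul_apply_eq_comp]
    have hfirst : RCLike.re ⟪w, (1 - p) y⟫_𝕜 ≤ ‖(1 - p) w‖ * ‖(1 - p) y‖ := by
      rw [hp.one_sub.inner_apply_right]
      exact re_inner_le_norm _ _
    have hcs := mul_add_mul_le_sqrt_mul_sqrt ‖(1 - p) w‖ ‖(1 - p) y‖ √S √(‖x‖ ^ 2 - ‖y‖ ^ 2)
    rw [Real.sq_sqrt hS, Real.sq_sqrt hD] at hcs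
    rw [hsplit, inner_add_right, map_add, List.prod_cons, mul_apply_eq_comp, hdefect,
      List.map_cons, List.sum_cons]
    exact (add_le_add hfirst (ih ht)).trans hcs

theorem norm_sq_sub_norm_list_prod_apply_sq_le {l : List (E →L[𝕜] E)}
    (hl : ∀ p ∈ l, IsStarProjection p) (x : E) :
    ‖x‖ ^ 2 - ‖l.prod x‖ ^ 2 ≤ 4 * (l.map fun p => ‖(1 - p) x‖ ^ 2).sum := by
  set S := (l.map fun p => ‖(1 - p) x‖ ^ 2).sum
  set D := ‖x‖ ^ 2 - ‖l.prod x‖ ^ 2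
  have hunion := re_inner_sub_list_prod_apply_le hl x x
  have hCx := norm_list_prod_apply_le hl x
  have hre : RCLike.re ⟪x, l.prod x⟫_𝕜 ≤ ‖x‖ * ‖l.prod x‖ := re_inner_le_norm _ _
  rw [inner_sub_right, map_sub, inner_self_eq_norm_sq] at hunion
  have hS0 : 0 ≤ S := List.sum_nonneg (by simp)
  have hD0 : 0 ≤ D := by nlinarith [norm_nonneg (l.prod x)]
  -- `D = (‖x‖ - ‖Cx‖)(‖x‖ + ‖Cx‖) ≤ 2‖x‖(‖x‖ - ‖Cx‖) ≤ 2 (‖x‖² - Re⟪x, Cx⟫)`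
  have hD : √D * √D ≤ 2 * √S * √D := by
    rw [Real.mul_self_sqrt hD0]; nlinarith [norm_nonneg (l.prod x)]
  have hsqrtD : √D ≤ 2 * √S := by
    rcases (Real.sqrt_nonneg D).eq_or_lt with h | h
    · rw [← h]; positivity
    · exact le_of_mul_le_mul_right hD h
  calc D = √D ^ 2 := (Real.sq_sqrt hD0).symm
    _ ≤ (2 * √S) ^ 2 := pow_le_pow_left₀ (Real.sqrt_nonneg D) hsqrtD 2
    _ = 4 * S := by rw [mul_pow, Real.sq_sqrt hS0]; norm_num

theorem norm_sub_star_mul_self_list_prod_apply_le {l : List (E →L[𝕜] E)}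
    (hl : ∀ p ∈ l, IsStarProjection p) {x : E} (hx : ‖x‖ = 1) :
    ‖x - (star l.prod * l.prod) x‖ ≤
      √2 * (l.map fun p => ‖(1 - p) x‖ ^ 2).sum ^ ((1 : ℝ) / 4) := by
  have hη := norm_sub_star_mul_self_apply_sq_le (norm_list_prod_le_one hl) x
  have hδ := norm_sq_sub_norm_list_prod_apply_sq_le hl x
  rw [hx] at hη hδ
  refine le_sqrt_two_mul_rpow_of_sq_le_four_mul (norm_nonneg _) ?_ (hη.trans hδ)
  nlinarith [norm_nonneg (l.prod x), norm_nonneg (x - (star l.prod * l.prod) x)]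

end Hilbert

namespace Matrix

section HilbertSchmidt

variable {𝕜 m n : Type*} [RCLike 𝕜]

/-- `X` as a vector of the Hilbert–Schmidt space. -/
noncomputable def hs (X : Matrix n m 𝕜) : EuclideanSpace 𝕜 (m × n) := WithLp.toLp 2 X.vec

@[simp] theorem hs_sub (X Y : Matrix n m 𝕜) : hs (X - Y) = hs X - hs Y := rfl

variable [Fintype m] [Fintype n]

theorem inner_hs (X Y : Matrix n m 𝕜) : ⟪hs X, hs Y⟫_𝕜 = (Xᴴ * Y).trace := by
  rw [hs, hs, EuclideanSpace.inner_toLp_toLp, dotProduct_comm, star_vec_dotProduct_vec]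

theorem norm_hs_sq (X : Matrix n m 𝕜) : ‖hs X‖ ^ 2 = RCLike.re (Xᴴ * X).trace := by
  rw [← inner_self_eq_norm_sq (𝕜 := 𝕜), inner_hs]

theorem norm_hs_mul_sq (A : Matrix n n 𝕜) (X : Matrix n m 𝕜) :
    ‖hs (A * X)‖ ^ 2 = RCLike.re (Aᴴ * A * (X * Xᴴ)).trace := by
  rw [norm_hs_sq, conjTranspose_mul, Matrix.mul_assoc, trace_mul_comm]
  simp only [Matrix.mul_assoc]

theorem _root_.IsStarProjection.norm_hs_mul_sq {p : Matrix n n 𝕜} (hp : IsStarProjection p)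
    (X : Matrix n m 𝕜) : ‖hs (p * X)‖ ^ 2 = RCLike.re (p * (X * Xᴴ)).trace := by
  rw [Matrix.norm_hs_mul_sq, ← star_eq_conjTranspose, hp.isSelfAdjoint.star_eq,
    hp.isIdempotentElem.eq]

variable [DecidableEq m] [DecidableEq n]

noncomputable def oneKroneckerStarAlgHom : Matrix n n 𝕜 →⋆ₐ[𝕜] Matrix (m × n) (m × n) 𝕜 where
  toFun A := 1 ⊗ₖ A
  map_one' := one_kronecker_one
  map_mul' A B := by rw [← mul_kronecker_mul, one_mul]
  map_zero' := kronecker_zero _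
  map_add' := kronecker_add _
  commutes' c := by simp [Algebra.algebraMap_eq_smul_one, kronecker_smul]
  map_star' A := by simp [star_eq_conjTranspose, conjTranspose_kronecker]

noncomputable def lmulHS (𝕜 m n : Type*) [RCLike 𝕜] [Fintype m] [DecidableEq m] [Fintype n]
    [DecidableEq n] :
    Matrix n n 𝕜 →⋆ₐ[𝕜] (EuclideanSpace 𝕜 (m × n) →L[𝕜] EuclideanSpace 𝕜 (m × n)) :=
  (toEuclideanCLM : Matrix (m × n) (m × n) 𝕜 ≃⋆ₐ[𝕜] _).toStarAlgHom.comp oneKroneckerStarAlgHom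

theorem lmulHS_hs (A : Matrix n n 𝕜) (X : Matrix n m 𝕜) :
    lmulHS 𝕜 m n A (hs X) = hs (A * X) := by
  simp [lmulHS, oneKroneckerStarAlgHom, hs, vec_mul_eq_mulVec]

variable {l : List (Matrix n n 𝕜)}

theorem isStarProjection_of_mem_map_lmulHS (hl : ∀ p ∈ l, IsStarProjection p) :
    ∀ q ∈ l.map (lmulHS 𝕜 m n), IsStarProjection q := by
  simpa using fun p hp => (hl p hp).map (lmulHS 𝕜 m n)

theorem star_mul_self_list_prod_map_lmulHS_hs (l : List (Matrix n n 𝕜)) (X : Matrix n m 𝕜) :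
    (star (l.map (lmulHS 𝕜 m n)).prod * (l.map (lmulHS 𝕜 m n)).prod) (hs X) =
      hs (star l.prod * l.prod * X) := by
  rw [← map_list_prod, ← map_star, ← map_mul, lmulHS_hs]

theorem norm_hs_star_mul_self_list_prod_mul_le (hl : ∀ p ∈ l, IsStarProjection p)
    (X : Matrix n m 𝕜) : ‖hs (star l.prod * l.prod * X)‖ ≤ ‖hs X‖ := by
  have hC := norm_list_prod_le_one (isStarProjection_of_mem_map_lmulHS (m := m) hl)
  rw [← star_mul_self_list_prod_map_lmulHS_hs]
  refine ContinuousLinearMap.le_of_opNorm_le _ ?_ _ |>.trans_eq (one_mul _)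
  rw [CStarRing.norm_star_mul_self (x := (l.map (lmulHS 𝕜 m n)).prod)]
  nlinarith [norm_nonneg (l.map (lmulHS 𝕜 m n)).prod]

theorem norm_hs_sub_star_mul_self_list_prod_mul_le (hl : ∀ p ∈ l, IsStarProjection p)
    {X : Matrix n m 𝕜} (hX : ‖hs X‖ = 1) :
    ‖hs (X - star l.prod * l.prod * X)‖ ≤
      √2 * (l.map fun p => ‖hs ((1 - p) * X)‖ ^ 2).sum ^ ((1 : ℝ) / 4) := by
  have hsub (p : Matrix n n 𝕜) : (1 - lmulHS 𝕜 m n p) (hs X) = hs ((1 - p) * X) := by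
    rw [← map_one (lmulHS 𝕜 m n), ← map_sub, lmulHS_hs]
  simpa only [star_mul_self_list_prod_map_lmulHS_hs, hs_sub, List.map_map, Function.comp_def,
    hsub] using norm_sub_star_mul_self_list_prod_apply_le (isStarProjection_of_mem_map_lmulHS hl) hX

end HilbertSchmidt

section TraceNorm

variable {m n : Type*} [Fintype m] [Fintype n] [DecidableEq n]

theorem traceNorm_eq_re_trace_cfc_sqrt (A : Matrix n n ℂ) :
    traceNorm A = (cfc Real.sqrt (Aᴴ * A)).trace.re := by
  rw [(posSemidef_conjTranspose_mul_self A).isHermitian.cfc_eq, IsHermitian.cfc,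
    Unitary.conjStarAlgAut_apply]
  rfl

theorem IsHermitian.traceNorm_eq_re_trace_cfc_abs {M : Matrix n n ℂ} (hM : M.IsHermitian) :
    traceNorm M = (cfc (fun x : ℝ => |x|) M).trace.re := by
  rw [traceNorm_eq_re_trace_cfc_sqrt, hM.eq, ← sq, ← cfc_comp_pow _ _ _
    (M.finite_real_spectrum.image _ |>.continuousOn _) hM.isSelfAdjoint]
  simp_rw [Real.sqrt_sq_eq_abs]

theorem IsHermitian.exists_unitary_traceNorm_eq {M : Matrix n n ℂ} (hM : M.IsHermitian) :
    ∃ W ∈ unitaryGroup n ℂ, traceNorm M = (W * M).trace.re := by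
  let s : ℝ → ℝ := fun x => if 0 ≤ x then 1 else -1
  have hs : ContinuousOn s (spectrum ℝ M) := M.finite_real_spectrum.continuousOn _
  refine ⟨cfc s M, ?_, ?_⟩
  · rw [Unitary.mem_iff, (cfc_predicate s M).star_eq, ← cfc_mul s s M, and_self]
    convert cfc_one ℝ M using 2
    funext x
    by_cases hx : 0 ≤ x <;> simp [s, hx]
  · have hmul : cfc s M * M = cfc (fun x => s x * x) M := by
      rw [cfc_mul s (fun x => x) M, cfc_id' ℝ M]
    rw [hM.traceNorm_eq_re_trace_cfc_abs, hmul]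
    congr 3
    funext x
    by_cases hx : 0 ≤ x
    · simp [s, hx, abs_of_nonneg hx]
    · simp [s, hx, abs_of_neg (not_le.mp hx)]

theorem traceNorm_mul_conjTranspose_sub_le [DecidableEq m] (X Y : Matrix n m ℂ) :
    traceNorm (X * Xᴴ - Y * Yᴴ) ≤ (‖hs X‖ + ‖hs Y‖) * ‖hs X - hs Y‖ := by
  obtain ⟨W, hW, hdual⟩ := ((isHermitian_mul_conjTranspose_self X).sub
    (isHermitian_mul_conjTranspose_self Y)).exists_unitary_traceNorm_eq
  set T := lmulHS ℂ m n W
  have hT : ‖T‖ ≤ 1 := by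
    simpa using (CStarRing.norm_mem_unitary_mul 1 (Unitary.map_mem (lmulHS ℂ m n) hW)).le.trans
      ContinuousLinearMap.norm_id_le
  have htrace (Z : Matrix n m ℂ) : (W * (Z * Zᴴ)).trace = ⟪hs Z, T (hs Z)⟫_ℂ := by
    rw [lmulHS_hs, inner_hs, ← Matrix.mul_assoc, trace_mul_comm]
  rw [hdual, Matrix.mul_sub, trace_sub, htrace, htrace]
  exact re_inner_map_self_sub_le hT _ _

theorem IsHermitian.traceNorm_sub_mul_mul_le [DecidableEq m] {B : Matrix n n ℂ}
    (hB : B.IsHermitian) (X : Matrix n m ℂ) :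
    traceNorm (X * Xᴴ - B * (X * Xᴴ) * B) ≤ (‖hs X‖ + ‖hs (B * X)‖) * ‖hs (X - B * X)‖ := by
  have hconj : B * (X * Xᴴ) * B = (B * X) * (B * X)ᴴ := by
    rw [conjTranspose_mul, hB.eq]
    simp only [Matrix.mul_assoc]
  rw [hconj, hs_sub]
  exact traceNorm_mul_conjTranspose_sub_le X (B * X)

end TraceNorm

end Matrix

/-- **Gentle sequential measurement by measuring forward and then in reverse.**
For a quantum state `ρ` and orthogonal projections `Π₁, …, Π_N` on `ℂ^d`, with
`B = Π₁ Π₂ ⋯ Π_{N−1} Π_N Π_{N−1} ⋯ Π₂ Π₁` (the product over the palindromic list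
`[Π₁, …, Π_N, Π_{N−1}, …, Π₁]`),
`‖ρ − B ρ B‖₁ ≤ 2 √2 · 2^{1/4} · (∑ᵢ Tr ((I − Πᵢ) ρ))^{1/4}`. -/
theorem gentle_forward_backward {d N : ℕ}
    (ρ : Matrix (Fin d) (Fin d) ℂ) (hρ : ρ.PosSemidef) (hρtr : ρ.trace = 1)
    (P : Fin N → Matrix (Fin d) (Fin d) ℂ)
    (hherm : ∀ i, (P i).IsHermitian) (hproj : ∀ i, P i * P i = P i) :
    traceNorm (ρ
        - (List.ofFn P ++ (List.ofFn P).reverse.tail).prod * ρ *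
            (List.ofFn P ++ (List.ofFn P).reverse.tail).prod)
      ≤ 2 * Real.sqrt 2 * (2 : ℝ) ^ ((1 : ℝ) / 4) *
          (∑ i, (((1 : Matrix (Fin d) (Fin d) ℂ) - P i) * ρ).trace.re) ^ ((1 : ℝ) / 4) := by
  obtain ⟨X, rfl⟩ := CStarAlgebra.nonneg_iff_eq_mul_star_self.mp hρ.nonneg
  have hP (i : Fin N) : IsStarProjection (P i) := ⟨hproj i, hherm i⟩
  have hl : ∀ p ∈ (List.ofFn P).reverse, IsStarProjection p := by simpa [List.mem_ofFn] using hP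
  rw [List.prod_append_reverse_tail_eq_star_mul_self (by simpa using hl)]
  set C := (List.ofFn P).reverse.prod
  have hX : ‖hs X‖ = 1 := by
    rw [← pow_eq_one_iff_of_nonneg (norm_nonneg _) two_ne_zero, norm_hs_sq, trace_mul_comm,
      ← star_eq_conjTranspose, hρtr, RCLike.one_re]
  set S := ((List.ofFn P).reverse.map fun p => ‖hs ((1 - p) * X)‖ ^ 2).sum with hSdef
  have hS : S = ∑ i, ((1 - P i) * (X * star X)).trace.re := by
    rw [hSdef, List.map_reverse, List.sum_reverse, List.map_ofFn, List.sum_ofFn]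
    exact Finset.sum_congr rfl fun i _ => (hP i).one_sub.norm_hs_mul_sq X
  have hS0 : 0 ≤ S ^ ((1 : ℝ) / 4) := Real.rpow_nonneg (List.sum_nonneg (by simp)) _
  rw [← hS]
  calc _ ≤ (‖hs X‖ + ‖hs (star C * C * X)‖) * ‖hs (X - star C * C * X)‖ :=
        IsHermitian.traceNorm_sub_mul_mul_le (IsSelfAdjoint.star_mul_self C) X
    _ ≤ 2 * (√2 * S ^ ((1 : ℝ) / 4)) := by
        gcongr
        · linarith [norm_hs_star_mul_self_list_prod_mul_le hl X]
        · exact norm_hs_sub_star_mul_self_list_prod_mul_le hl hX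
    _ = 2 * √2 * 1 * S ^ ((1 : ℝ) / 4) := by ring
    _ ≤ 2 * √2 * (2 : ℝ) ^ ((1 : ℝ) / 4) * S ^ ((1 : ℝ) / 4) := by
        gcongr
        exact Real.one_le_rpow one_le_two (by norm_num)
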